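/- Let F : Rel → Rel be a strict locally continuous functor. Define μF = ⋃_{n∈ℕ} Fⁿ(∅). Then F(μF) = μF, and the coalgebra (μF, Id) is a final object in the category of F-coalgebras: for every set E and relation t ∈ Rel(E, F(E)) there exists a unique e ∈ Rel(E, μF) with F(e) ∘ t = e. -/

import Mathlib

/-- Relational composition (diagrammatic order). -/
def relComp {U : Type*} (r s : Set (U × U)) : Set (U × U) :=
  {p | ∃ b, (p.1, b) ∈ r ∧ (b, p.2) ∈ s}

/-- The diagonal (identity/inclusion) relation on a set `E`. -/
def diagRel {U : Type*} (E : Set U) : Set (U × U) :=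
  {p | p.1 = p.2 ∧ p.1 ∈ E}

/-- A functor on the category `Rel` of sets (subsets of a universe `U`)
and relations. -/
structure RelFunctor (U : Type*) where
  obj : Set U → Set U
  map : (E F : Set U) → Set (U × U) → Set (U × U)
  map_sub : ∀ E F r, r ⊆ E ×ˢ F → map E F r ⊆ obj E ×ˢ obj F
  map_id : ∀ E, map E E (diagRel E) = diagRel (obj E)
  map_comp : ∀ E F G r s, r ⊆ E ×ˢ F → s ⊆ F ×ˢ G →
    map E G (relComp r s) = relComp (map E F r) (map F G s)

/-- Local continuity: commutation with directed unions of morphisms. -/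
def LocallyContinuous {U : Type*} (F : RelFunctor U) : Prop :=
  ∀ (E E' : Set U) (D : Set (Set (U × U))), D.Nonempty → DirectedOn (· ⊆ ·) D →
    (∀ r ∈ D, r ⊆ E ×ˢ E') → F.map E E' (⋃₀ D) = ⋃ r ∈ D, F.map E E' r

/-- Strictness: `F` maps set inclusions to set inclusions. -/
def StrictFunctor {U : Type*} (F : RelFunctor U) : Prop :=
  ∀ E E' : Set U, E ⊆ E' →
    F.obj E ⊆ F.obj E' ∧ F.map E E' (diagRel E) = diagRel (F.obj E)

/-!
Strictness makes `n ↦ Fⁿ(∅)` an increasing chain, and together with local continuity it shows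
that `F` sends the partial identity on `A ⊆ M` to the partial identity on `F(A)`. Applying
continuity to the chain of partial identities `diagRel (Fⁿ ∅)`, whose union is the identity on
`μF`, gives `F(μF) = μF`. The morphism into `μF` is the union of the approximants
`e₀ = ∅`, `eₙ₊₁ = t ; F(eₙ)`, a fixed point by continuity; any other morphism `e` satisfies
`e ; diagRel (Fⁿ ∅) = eₙ` by induction on `n`, and the union over `n` of these restrictions is `e`.
-/

section Relations

variable {U : Type*}

lemma relComp_assoc (r s u : Set (U × U)) :
    relComp (relComp r s) u = relComp r (relComp s u) :=
  SetRel.comp_assoc r s u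

lemma relComp_iUnion {ι : Sort*} (r : Set (U × U)) (s : ι → Set (U × U)) :
    relComp r (⋃ i, s i) = ⋃ i, relComp r (s i) :=
  SetRel.comp_iUnion r s

lemma relComp_empty (r : Set (U × U)) : relComp r ∅ = ∅ :=
  SetRel.comp_empty r

lemma relComp_mono_right (r : Set (U × U)) {s s' : Set (U × U)} (h : s ⊆ s') :
    relComp r s ⊆ relComp r s' :=
  SetRel.comp_subset_comp_right h

lemma diagRel_subset_prod {A B C : Set U} (hB : A ⊆ B) (hC : A ⊆ C) : diagRel A ⊆ B ×ˢ C := by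
  rintro ⟨x, y⟩ ⟨rfl : x = y, hx⟩
  exact ⟨hB hx, hC hx⟩

lemma diagRel_mono : Monotone (diagRel : Set U → Set (U × U)) := by
  rintro A B h ⟨x, y⟩ ⟨rfl : x = y, hx⟩
  exact ⟨rfl, h hx⟩

lemma diagRel_injective : Function.Injective (diagRel : Set U → Set (U × U)) := by
  intro A B h
  ext x
  exact ⟨fun hx => (h ▸ ⟨rfl, hx⟩ : (x, x) ∈ diagRel B).2,
    fun hx => (h ▸ ⟨rfl, hx⟩ : (x, x) ∈ diagRel A).2⟩

lemma diagRel_empty : diagRel (∅ : Set U) = ∅ := by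
  ext ⟨x, y⟩
  simp [diagRel]

lemma diagRel_iUnion {ι : Sort*} (A : ι → Set U) : diagRel (⋃ i, A i) = ⋃ i, diagRel (A i) := by
  ext ⟨x, y⟩
  simp [diagRel]

lemma relComp_diagRel_self (A : Set U) : relComp (diagRel A) (diagRel A) = diagRel A := by
  ext ⟨x, y⟩
  simp [relComp, diagRel]

lemma relComp_diagRel_of_subset {r : Set (U × U)} {E A : Set U} (h : r ⊆ E ×ˢ A) :
    relComp r (diagRel A) = r := by
  ext ⟨x, y⟩
  constructor
  · rintro ⟨b, hb, rfl : b = y, -⟩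
    exact hb
  · intro hxy
    exact ⟨y, hxy, rfl, (h hxy).2⟩

end Relations

section Continuity

variable {U : Type*}

lemma StrictFunctor.monotone_obj {F : RelFunctor U} (hs : StrictFunctor F) : Monotone F.obj :=
  fun _ _ h => (hs _ _ h).1

lemma LocallyContinuous.map_mono {F : RelFunctor U} (hc : LocallyContinuous F) {E E' : Set U}
    {r s : Set (U × U)} (hrs : r ⊆ s) (hsub : s ⊆ E ×ˢ E') : F.map E E' r ⊆ F.map E E' s := by
  have hpair := hc E E' {r, s} (Set.insert_nonempty r {s}) (directedOn_pair hrs)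
    (by rintro _ (rfl | rfl) <;> [exact hrs.trans hsub; exact hsub])
  rw [Set.sUnion_pair, Set.union_eq_right.2 hrs] at hpair
  exact hpair ▸ Set.subset_biUnion_of_mem (u := fun x => F.map E E' x) (Set.mem_insert r {s})

lemma LocallyContinuous.map_iUnion {F : RelFunctor U} (hc : LocallyContinuous F) {E E' : Set U}
    {r : ℕ → Set (U × U)} (hr : Monotone r) (hsub : ∀ n, r n ⊆ E ×ˢ E') :
    F.map E E' (⋃ n, r n) = ⋃ n, F.map E E' (r n) := by
  have h := hc E E' (Set.range r) (Set.range_nonempty r) (directedOn_range.2 hr.directed_le)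
    (Set.forall_mem_range.2 hsub)
  rwa [Set.sUnion_range, Set.biUnion_range] at h

end Continuity

namespace RelFunctor

variable {U : Type*} (F : RelFunctor U)

/-- Factor `diagRel A : M → M` as `(M → A) ; (A → M)`. Strictness computes `F` of the second
factor, and `g = F (diagRel A : M → A)` is squeezed between `diagRel (F A)`, since
`F (id_A) = id`, and the diagonal, by monotonicity of `F.map`. -/
lemma map_diagRel_of_subset (hc : LocallyContinuous F) (hs : StrictFunctor F) {A M : Set U}
    (hA : A ⊆ M) : F.map M M (diagRel A) = diagRel (F.obj A) := by
  have hAM : diagRel A ⊆ A ×ˢ M := diagRel_subset_prod le_rfl hA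
  have hMA : diagRel A ⊆ M ×ˢ A := diagRel_subset_prod hA le_rfl
  set g := F.map M A (diagRel A)
  have hgsub : g ⊆ F.obj M ×ˢ F.obj A := F.map_sub M A _ hMA
  have hstrict : F.map A M (diagRel A) = diagRel (F.obj A) := (hs A M hA).2
  have hMM : F.map M M (diagRel A) = g := by
    rw [← relComp_diagRel_self A, F.map_comp M A M _ _ hMA hAM, hstrict,
      relComp_diagRel_of_subset hgsub]
  have hAA : diagRel (F.obj A) = relComp (diagRel (F.obj A)) g := by
    calc diagRel (F.obj A) = F.map A A (relComp (diagRel A) (diagRel A)) := by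
          rw [relComp_diagRel_self, F.map_id]
      _ = relComp (diagRel (F.obj A)) g := by rw [F.map_comp A M A _ _ hAM hMA, hstrict]
  have hgdiag : g ⊆ diagRel (F.obj M) := by
    rw [← hMM, ← F.map_id M]
    exact hc.map_mono (diagRel_mono hA) (diagRel_subset_prod le_rfl le_rfl)
  rw [hMM]
  refine subset_antisymm (fun p hp => ⟨(hgdiag hp).1, (hgdiag hp).1 ▸ (hgsub hp).2⟩) ?_
  rintro ⟨x, y⟩ hxy
  obtain ⟨b, ⟨rfl : x = b, -⟩, hb⟩ := hAA ▸ hxy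
  exact hb

def mu : Set U := ⋃ n : ℕ, F.obj^[n] ∅

lemma monotone_iterate_obj (hs : StrictFunctor F) : Monotone fun n => F.obj^[n] ∅ :=
  hs.monotone_obj.monotone_iterate_of_le_map (Set.empty_subset _)

lemma iterate_obj_subset_mu (n : ℕ) : F.obj^[n] ∅ ⊆ F.mu :=
  Set.subset_iUnion (fun n => F.obj^[n] ∅) n

lemma diagRel_mu : diagRel F.mu = ⋃ n : ℕ, diagRel (F.obj^[n] ∅) :=
  diagRel_iUnion _

lemma map_diagRel_iterate_obj (hc : LocallyContinuous F) (hs : StrictFunctor F) (n : ℕ) :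
    F.map F.mu F.mu (diagRel (F.obj^[n] ∅)) = diagRel (F.obj^[n + 1] ∅) := by
  rw [Function.iterate_succ_apply']
  exact F.map_diagRel_of_subset hc hs (F.iterate_obj_subset_mu n)

lemma obj_mu (hc : LocallyContinuous F) (hs : StrictFunctor F) : F.obj F.mu = F.mu := by
  have hchain : Monotone fun n => diagRel (F.obj^[n] ∅) :=
    diagRel_mono.comp (F.monotone_iterate_obj hs)
  apply diagRel_injective
  calc diagRel (F.obj F.mu) = F.map F.mu F.mu (diagRel F.mu) := (F.map_id _).symm
    _ = ⋃ n, F.map F.mu F.mu (diagRel (F.obj^[n] ∅)) := by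
      rw [diagRel_mu]
      exact hc.map_iUnion hchain fun n =>
        diagRel_subset_prod (F.iterate_obj_subset_mu n) (F.iterate_obj_subset_mu n)
    _ = ⋃ n, diagRel (F.obj^[n + 1] ∅) := by simp_rw [F.map_diagRel_iterate_obj hc hs]
    _ = diagRel F.mu := by rw [hchain.iUnion_nat_add 1, diagRel_mu]

def approx (E M : Set U) (t : Set (U × U)) : ℕ → Set (U × U)
  | 0 => ∅
  | n + 1 => relComp t (F.map E M (approx E M t n))

section approx

variable {F} {E M : Set U} {t : Set (U × U)}

lemma approx_subset (hM : F.obj M ⊆ M) (ht : t ⊆ E ×ˢ F.obj E) :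
    ∀ n, F.approx E M t n ⊆ E ×ˢ M
  | 0 => Set.empty_subset _
  | n + 1 => by
    rintro ⟨x, y⟩ ⟨b, hxb, hby⟩
    exact ⟨(ht hxb).1, hM (F.map_sub E M _ (approx_subset hM ht n) hby).2⟩

lemma monotone_approx (hc : LocallyContinuous F) (hM : F.obj M ⊆ M) (ht : t ⊆ E ×ˢ F.obj E) :
    Monotone (F.approx E M t) := by
  refine monotone_nat_of_le_succ fun n => ?_
  induction n with
  | zero => exact Set.empty_subset _
  | succ n ih => exact relComp_mono_right t (hc.map_mono ih (approx_subset hM ht (n + 1)))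

lemma relComp_map_iUnion_approx (hc : LocallyContinuous F) (hM : F.obj M ⊆ M)
    (ht : t ⊆ E ×ˢ F.obj E) :
    relComp t (F.map E M (⋃ n, F.approx E M t n)) = ⋃ n, F.approx E M t n := by
  rw [hc.map_iUnion (monotone_approx hc hM ht) (approx_subset hM ht), relComp_iUnion]
  exact (monotone_approx hc hM ht).iUnion_nat_add 1

lemma relComp_diagRel_iterate_obj (hc : LocallyContinuous F) (hs : StrictFunctor F)
    {e : Set (U × U)} (he : e ⊆ E ×ˢ F.mu) (hfix : relComp t (F.map E F.mu e) = e) (n : ℕ) :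
    relComp e (diagRel (F.obj^[n] ∅)) = F.approx E F.mu t n := by
  induction n with
  | zero => exact (congrArg (relComp e) diagRel_empty).trans (relComp_empty e)
  | succ n ih =>
    rw [← F.map_diagRel_iterate_obj hc hs, ← hfix, relComp_assoc,
      ← F.map_comp _ _ _ _ _ he (diagRel_subset_prod (F.iterate_obj_subset_mu n)
        (F.iterate_obj_subset_mu n)), ih]
    rfl

lemma eq_iUnion_approx (hc : LocallyContinuous F) (hs : StrictFunctor F) {e : Set (U × U)}
    (he : e ⊆ E ×ˢ F.mu) (hfix : relComp t (F.map E F.mu e) = e) :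
    e = ⋃ n, F.approx E F.mu t n := by
  calc e = relComp e (diagRel F.mu) := (relComp_diagRel_of_subset he).symm
    _ = ⋃ n, relComp e (diagRel (F.obj^[n] ∅)) := by rw [diagRel_mu, relComp_iUnion]
    _ = ⋃ n, F.approx E F.mu t n := by simp_rw [relComp_diagRel_iterate_obj hc hs he hfix]

end approx

end RelFunctor

/-- For a strict locally continuous functor `F` on `Rel`, the set
`μF = ⋃ₙ Fⁿ(∅)` satisfies `F(μF) = μF` and `(μF, Id)` is the final
`F`-coalgebra: every coalgebra `t : E → F(E)` has a unique morphism
`e` to it, i.e. `e ⊆ E × μF` with `F(e) ∘ t = e`. -/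
theorem strict_locallyContinuous_final_coalgebra {U : Type*} (F : RelFunctor U)
    (hc : LocallyContinuous F) (hs : StrictFunctor F) :
    F.obj (⋃ n : ℕ, F.obj^[n] ∅) = ⋃ n : ℕ, F.obj^[n] ∅ ∧
      ∀ (E : Set U) (t : Set (U × U)), t ⊆ E ×ˢ F.obj E →
        ∃! e : Set (U × U), e ⊆ E ×ˢ (⋃ n : ℕ, F.obj^[n] ∅) ∧
          relComp t (F.map E (⋃ n : ℕ, F.obj^[n] ∅) e) = e := by
  have hμ : F.obj F.mu = F.mu := F.obj_mu hc hs
  refine ⟨hμ, fun E t ht => ⟨⋃ n, F.approx E F.mu t n, ⟨?_, ?_⟩, ?_⟩⟩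
  · exact Set.iUnion_subset (RelFunctor.approx_subset hμ.le ht)
  · exact RelFunctor.relComp_map_iUnion_approx hc hμ.le ht
  · rintro e ⟨he, hfix⟩
    exact RelFunctor.eq_iUnion_approx hc hs he hfix
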